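/- arXiv:1310.0545 — 4 statements merged into one kernel-verified Lean document; each statement's English description precedes it below -/
import Mathlib

section
/- Let V = ⊕_{n ≥ n₀} V_n (n₀ ∈ ℤ) be a ℤ-graded complex vector space whose grading is bounded below, equipped with bilinear products (u,v) ↦ u(k)v for each k ∈ ℤ such that u(k)v ∈ V_{j+m−k−1} whenever u ∈ V_j and v ∈ V_m, and suppose the commutator formula holds. Then: (a) the product [u,v] := u(0)v satisfies the left Leibniz identity [u,[v,w]] = [[u,v],w] + [v,[u,w]] for all u,v,w ∈ V; (b) the subspaces ⊕_{n≤0} V_n, V_1, and ⊕_{n≥2} V_n are each closed under this product; (c) W := ⊕_{n≤0} V_n is nilpotent as a Leibniz algebra: every iterated bracket (in any arrangement of parentheses) of more than 1−n₀ elements of W is zero. -/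
/-
Since `u(k)v` has degree `j + m - k - 1` and degrees are bounded below by `n₀`, `u(i)v = 0` for
all large `i`, so the commutator formula applies to every triple; at `p = q = 0` only the
`i = 0` term survives (`binom(0, i) = 0` for `i > 0`), which is the Leibniz identity. The
`0`-th product lowers total degree by one, so the closure statements are degree bookkeeping, and
an iterated bracket of `k` elements of degree `≤ 0` has degree `≤ 1 - k`, below `n₀` once
`k > 1 - n₀`.
-/

/-- Iterated brackets (with arbitrary arrangement of parentheses) of elements of `W`;
`IsIterBracket br W m x` means that `x` is an iterated bracket of `m` elements of `W`. -/
inductive IsIterBracket {V : Type*} (br : V → V → V) (W : Set V) : ℕ → V → Prop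
  | base (w : V) (hw : w ∈ W) : IsIterBracket br W 1 w
  | node {m n : ℕ} {u v : V} (hu : IsIterBracket br W m u)
      (hv : IsIterBracket br W n v) : IsIterBracket br W (m + n) (br u v)

open Filter

namespace Submodule

variable {ι κ R M N P : Type*} [CommSemiring R] [AddCommMonoid M] [AddCommMonoid N]
  [AddCommMonoid P] [Module R M] [Module R N] [Module R P]

theorem apply_mem_of_mem_biSup {f : M →ₗ[R] N →ₗ[R] P} {A : ι → Submodule R M}
    {B : κ → Submodule R N} {s : Set ι} {t : Set κ} {C : Submodule R P}
    (h : ∀ i ∈ s, ∀ j ∈ t, ∀ m ∈ A i, ∀ n ∈ B j, f m n ∈ C) {m : M} {n : N}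
    (hm : m ∈ ⨆ i ∈ s, A i) (hn : n ∈ ⨆ j ∈ t, B j) : f m n ∈ C := by
  have hle : map₂ f (⨆ i ∈ s, A i) (⨆ j ∈ t, B j) ≤ C := by
    simp only [map₂_iSup_left, map₂_iSup_right, iSup_le_iff, map₂_le]
    exact fun j hj i hi => h i hi j hj
  exact hle (apply_mem_map₂ f hm hn)

theorem eventually_apply_eq_zero_of_iSup_eq_top {α : Type*} {l : Filter α}
    {f : α → M →ₗ[R] N →ₗ[R] P} {A : ι → Submodule R M} {B : κ → Submodule R N}
    (hA : ⨆ i, A i = ⊤) (hB : ⨆ j, B j = ⊤)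
    (h : ∀ i j, ∀ m ∈ A i, ∀ n ∈ B j, ∀ᶠ a in l, f a m n = 0) (m : M) (n : N) :
    ∀ᶠ a in l, f a m n = 0 := by
  refine iSup_induction A (motive := fun m => ∀ᶠ a in l, f a m n = 0)
    (hA ▸ mem_top) (fun i m hm => ?_) (by simp) fun m m' hm hm' => ?_
  · refine iSup_induction B (motive := fun n => ∀ᶠ a in l, f a m n = 0)
      (hB ▸ mem_top) (fun j n hn => h i j m hm n hn) (by simp) fun n n' hn hn' => ?_
    filter_upwards [hn, hn'] with a ha ha'
    simp [ha, ha']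
  · filter_upwards [hm, hm'] with a ha ha'
    simp [ha, ha']

end Submodule

theorem leibniz_of_commutator_formula {R M : Type*} [CommRing R] [BinomialRing R]
    [AddCommGroup M] [Module R M] (mul : ℤ → M →ₗ[R] M →ₗ[R] M)
    (hfin : ∀ u v, ∀ᶠ i : ℕ in atTop, mul i u v = 0)
    (hcomm : ∀ (p q : ℤ) (u v w : M) (N : ℕ),
      (∀ i : ℕ, N ≤ i → mul (i : ℤ) u v = 0) →
      mul p u (mul q v w) - mul q v (mul p u w) =
        ∑ i ∈ Finset.range N,
          (Ring.choose p i : R) • mul (p + q - (i : ℤ)) (mul (i : ℤ) u v) w)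
    (u v w : M) : mul 0 u (mul 0 v w) = mul 0 (mul 0 u v) w + mul 0 v (mul 0 u w) := by
  obtain ⟨N, hN⟩ := eventually_atTop.mp (hfin u v)
  have h := hcomm 0 0 u v w (N + 1) fun i hi => hN i (by omega)
  rw [Finset.sum_range_succ', Finset.sum_eq_zero fun i _ => by simp] at h
  simpa [sub_eq_iff_eq_add] using h

section Graded

variable {R V : Type*} [CommSemiring R] [AddCommMonoid V] [Module R V]
  {Vn : ℤ → Submodule R V} {mul : ℤ → V →ₗ[R] V →ₗ[R] V}

theorem mul_mem_biSup_of_grade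
    (hgrade : ∀ (k j m : ℤ) (u v : V), u ∈ Vn j → v ∈ Vn m → mul k u v ∈ Vn (j + m - k - 1))
    {k : ℤ} {S T U : Set ℤ} (hSTU : ∀ j ∈ S, ∀ m ∈ T, j + m - k - 1 ∈ U) {u v : V}
    (hu : u ∈ ⨆ n ∈ S, Vn n) (hv : v ∈ ⨆ n ∈ T, Vn n) : mul k u v ∈ ⨆ n ∈ U, Vn n :=
  Submodule.apply_mem_of_mem_biSup (fun j hj m hm x hx y hy =>
    le_iSup₂ (f := fun n _ => Vn n) _ (hSTU j hj m hm) (hgrade k j m x y hx hy)) hu hv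

theorem biSup_le_eq_bot {n₀ a : ℤ} (hbdd : ∀ n : ℤ, n < n₀ → Vn n = ⊥) (ha : a < n₀) :
    ⨆ n ∈ {n : ℤ | n ≤ a}, Vn n = ⊥ :=
  le_bot_iff.mp (iSup₂_le fun n hn => (hbdd n (lt_of_le_of_lt hn ha)).le)

theorem eventually_mul_eq_zero {n₀ : ℤ} (htop : ⨆ n, Vn n = ⊤)
    (hbdd : ∀ n : ℤ, n < n₀ → Vn n = ⊥)
    (hgrade : ∀ (k j m : ℤ) (u v : V), u ∈ Vn j → v ∈ Vn m → mul k u v ∈ Vn (j + m - k - 1))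
    (u v : V) : ∀ᶠ i : ℕ in atTop, mul i u v = 0 := by
  refine Submodule.eventually_apply_eq_zero_of_iSup_eq_top htop htop
    (fun j m x hx y hy => ?_) u v
  filter_upwards [eventually_ge_atTop (j + m - n₀).toNat] with i hi
  simpa [hbdd _ (by omega : j + m - i - 1 < n₀)] using hgrade i j m x y hx hy

theorem IsIterBracket.mem_biSup_le_one_sub
    (hgrade : ∀ (k j m : ℤ) (u v : V), u ∈ Vn j → v ∈ Vn m → mul k u v ∈ Vn (j + m - k - 1))
    {k : ℕ} {x : V} (hx : IsIterBracket (fun u v => mul 0 u v)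
      ((⨆ n ∈ {n : ℤ | n ≤ 0}, Vn n : Submodule R V) : Set V) k x) :
    x ∈ ⨆ n ∈ {n : ℤ | n ≤ 1 - (k : ℤ)}, Vn n := by
  induction hx with
  | base w hw => simpa using hw
  | node _ _ ihu ihv =>
    refine mul_mem_biSup_of_grade hgrade (fun j hj m hm => ?_) ihu ihv
    simp only [Set.mem_ofPred_eq] at hj hm ⊢
    omega

end Graded

/-- Let `V = ⊕_{n ≥ n₀} V n` be a ℤ-graded complex vector space whose grading is bounded
below, with bilinear products `mul k` such that `u(k)v ∈ V_{j+m-k-1}` for `u ∈ V_j`,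
`v ∈ V_m`, satisfying the commutator formula.  Then (a) `u(0)v` satisfies the left Leibniz
identity; (b) `⊕_{n≤0} V_n`, `V_1`, and `⊕_{n≥2} V_n` are closed under the `0`-th product;
(c) `W = ⊕_{n≤0} V_n` is nilpotent: any iterated bracket of more than `1 - n₀` elements
of `W` vanishes. -/
theorem stmt0
    (V : Type*) [AddCommGroup V] [Module ℂ V]
    (n₀ : ℤ) (Vn : ℤ → Submodule ℂ V)
    (hdecomp : DirectSum.IsInternal Vn)
    (hbdd : ∀ n : ℤ, n < n₀ → Vn n = ⊥)
    (mul : ℤ → V →ₗ[ℂ] V →ₗ[ℂ] V)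
    (hgrade : ∀ (k j m : ℤ) (u v : V), u ∈ Vn j → v ∈ Vn m →
      mul k u v ∈ Vn (j + m - k - 1))
    (hcomm : ∀ (p q : ℤ) (u v w : V) (N : ℕ),
      (∀ i : ℕ, N ≤ i → mul (i : ℤ) u v = 0) →
      mul p u (mul q v w) - mul q v (mul p u w) =
        ∑ i ∈ Finset.range N,
          (Ring.choose p i : ℂ) • mul (p + q - (i : ℤ)) (mul (i : ℤ) u v) w) :
    (∀ u v w : V,
        mul 0 u (mul 0 v w) = mul 0 (mul 0 u v) w + mul 0 v (mul 0 u w)) ∧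
    (∀ u v : V, u ∈ (⨆ n ∈ {n : ℤ | n ≤ 0}, Vn n) → v ∈ (⨆ n ∈ {n : ℤ | n ≤ 0}, Vn n) →
        mul 0 u v ∈ (⨆ n ∈ {n : ℤ | n ≤ 0}, Vn n)) ∧
    (∀ u v : V, u ∈ Vn 1 → v ∈ Vn 1 → mul 0 u v ∈ Vn 1) ∧
    (∀ u v : V, u ∈ (⨆ n ∈ {n : ℤ | 2 ≤ n}, Vn n) → v ∈ (⨆ n ∈ {n : ℤ | 2 ≤ n}, Vn n) →
        mul 0 u v ∈ (⨆ n ∈ {n : ℤ | 2 ≤ n}, Vn n)) ∧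
    (∀ (m : ℕ) (x : V), (1 - n₀ : ℤ) < (m : ℤ) →
        IsIterBracket (fun u v => mul 0 u v)
          ((⨆ n ∈ {n : ℤ | n ≤ 0}, Vn n : Submodule ℂ V) : Set V) m x → x = 0) := by
  have hfin := eventually_mul_eq_zero hdecomp.submodule_iSup_eq_top hbdd hgrade
  refine ⟨leibniz_of_commutator_formula mul hfin hcomm, ?_, ?_, ?_, ?_⟩
  · exact fun u v => mul_mem_biSup_of_grade hgrade fun j hj m hm => by
      simp only [Set.mem_ofPred_eq] at hj hm ⊢; omega
  · intro u v hu hv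
    simpa using hgrade 0 1 1 u v hu hv
  · exact fun u v => mul_mem_biSup_of_grade hgrade fun j hj m hm => by
      simp only [Set.mem_ofPred_eq] at hj hm ⊢; omega
  · intro m x hm hx
    have hx' := hx.mem_biSup_le_one_sub hgrade
    rwa [biSup_le_eq_bot hbdd (by omega), Submodule.mem_bot] at hx'
end

section
/- Let V be a complex vector space with bilinear products u(k)v (k ∈ ℤ) that are truncated (for all u,v there is N with u(k)v = 0 for all k ≥ N) and satisfy the commutator formula. Let S and W be subspaces of V such that: (i) every element of S is a linear combination of elements of the form a(0)b with a,b ∈ S; and (ii) u(k)w = 0 for all u ∈ S, w ∈ W and all k ≥ 0. Then the corresponding operators commute: u(m)(w(n)x) = w(n)(u(m)x) for all u ∈ S, w ∈ W, all m,n ∈ ℤ, and all x ∈ V. -/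
theorem stmt3_general
    (V : Type*) [AddCommGroup V] [Module ℂ V]
    (mul : ℤ → V →ₗ[ℂ] V →ₗ[ℂ] V)
    (hcomm : ∀ (p q : ℤ) (u v w : V) (N : ℕ),
      (∀ i : ℕ, N ≤ i → mul (i : ℤ) u v = 0) →
      mul p u (mul q v w) - mul q v (mul p u w) =
        ∑ i ∈ Finset.range N,
          (Ring.choose p i : ℂ) • mul (p + q - (i : ℤ)) (mul (i : ℤ) u v) w)
    (S W : Submodule ℂ V)
    (hSW : ∀ u ∈ S, ∀ w ∈ W, ∀ k : ℕ, mul (k : ℤ) u w = 0) :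
    ∀ u ∈ S, ∀ w ∈ W, ∀ (m n : ℤ) (x : V),
      mul m u (mul n w x) = mul n w (mul m u x) := by
  intro u hu w hw m n x
  -- Since `u(i)w = 0` for every `i ≥ 0`, the commutator formula applies with the empty sum.
  have hcommutator := hcomm m n u w x 0 fun i _ => hSW u hu w hw i
  rwa [Finset.sum_range_zero, sub_eq_zero] at hcommutator

/-- Let `V` be a complex vector space with bilinear products `mul k` (`k ∈ ℤ`) that are
truncated and satisfy the commutator formula.  Let `S` and `W` be subspaces such that
(i) every element of `S` is a linear combination of elements `mul 0 a b` with `a, b ∈ S`,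
and (ii) `mul k u w = 0` for all `u ∈ S`, `w ∈ W`, `k ≥ 0`.  Then the corresponding
operators commute: `u(m)(w(n)x) = w(n)(u(m)x)` for `u ∈ S`, `w ∈ W`, `m, n ∈ ℤ`, `x ∈ V`. -/
theorem stmt3
    (V : Type*) [AddCommGroup V] [Module ℂ V]
    (mul : ℤ → V →ₗ[ℂ] V →ₗ[ℂ] V)
    (htrunc : ∀ u v : V, ∃ N : ℤ, ∀ k : ℤ, N ≤ k → mul k u v = 0)
    (hcomm : ∀ (p q : ℤ) (u v w : V) (N : ℕ),
      (∀ i : ℕ, N ≤ i → mul (i : ℤ) u v = 0) →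
      mul p u (mul q v w) - mul q v (mul p u w) =
        ∑ i ∈ Finset.range N,
          (Ring.choose p i : ℂ) • mul (p + q - (i : ℤ)) (mul (i : ℤ) u v) w)
    (S W : Submodule ℂ V)
    (hS : S ≤ Submodule.span ℂ {x : V | ∃ a ∈ S, ∃ b ∈ S, x = mul 0 a b})
    (hSW : ∀ u ∈ S, ∀ w ∈ W, ∀ k : ℕ, mul (k : ℤ) u w = 0) :
    ∀ u ∈ S, ∀ w ∈ W, ∀ (m n : ℤ) (x : V),
      mul m u (mul n w x) = mul n w (mul m u x) :=
  stmt3_general V mul hcomm S W hSW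
end

section
/- Let E be a real inner product space, L ⊆ E an additive subgroup, and h ∈ E such that (2h,α) ≤ (α,α) for every α ∈ L. Set A := {α ∈ L : (α,α) = (2h,α)}. Then for all α, β ∈ A one has (α,β) ≥ 0, and moreover (α,β) = 0 if and only if α + β ∈ A. -/
/-!
On `L` the defect `q α = ⟪α, α⟫ - ⟪2h, α⟫` is nonnegative and vanishes exactly on `A`.
Since `q (α + β) = q α + q β + 2 ⟪α, β⟫`, for `α, β ∈ A` we get `2 ⟪α, β⟫ = q (α + β) ≥ 0`,
with equality iff `α + β ∈ A`.
-/

open scoped RealInnerProductSpace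

lemma inner_self_sub_inner_add {E : Type*} [NormedAddCommGroup E] [InnerProductSpace ℝ E]
    (v α β : E) :
    ⟪α + β, α + β⟫ - ⟪v, α + β⟫
      = (⟪α, α⟫ - ⟪v, α⟫) + (⟪β, β⟫ - ⟪v, β⟫) + 2 * ⟪α, β⟫ := by
  rw [real_inner_add_add_self, inner_add_right]
  ring

/-- Let `E` be a real inner product space, `L ⊆ E` an additive subgroup and `h ∈ E` such
that `(2h, α) ≤ (α, α)` for every `α ∈ L`.  Let `A = {α ∈ L : (α, α) = (2h, α)}`.  Then
for all `α, β ∈ A` one has `(α, β) ≥ 0`, and `(α, β) = 0` iff `α + β ∈ A`. -/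
theorem stmt5 (E : Type*) [NormedAddCommGroup E] [InnerProductSpace ℝ E]
    (L : AddSubgroup E) (h : E)
    (hle : ∀ α ∈ L, (inner ℝ ((2 : ℝ) • h) α : ℝ) ≤ (inner ℝ α α : ℝ))
    (A : Set E)
    (hA : A = {α : E | α ∈ L ∧ (inner ℝ α α : ℝ) = (inner ℝ ((2 : ℝ) • h) α : ℝ)}) :
    ∀ α ∈ A, ∀ β ∈ A,
      (0 ≤ (inner ℝ α β : ℝ)) ∧ ((inner ℝ α β : ℝ) = 0 ↔ α + β ∈ A) := by
  subst hA
  rintro α ⟨hαL, hα⟩ β ⟨hβL, hβ⟩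
  have hsumL : α + β ∈ L := L.add_mem hαL hβL
  have hdefect := inner_self_sub_inner_add ((2 : ℝ) • h) α β
  have hsum := hle (α + β) hsumL
  exact ⟨by linarith, fun h0 ↦ ⟨hsumL, by linarith⟩, fun ⟨_, heq⟩ ↦ by linarith⟩
end

section
/- Let (A, B) be a commutative Frobenius ℂ-algebra that is a local ring with maximal ideal m and residue field ℂ. Let D : A → A be a diagonalizable derivation whose 0-eigenspace is exactly ℂ·1, and suppose there is ν ∈ ℂ such that B(Da,b) + B(a,Db) = ν·B(a,b) for all a,b ∈ A. For λ ∈ ℂ write A^λ for the λ-eigenspace of D. Then: (i) A^λ · A^μ ⊆ A^{λ+μ} for all λ,μ; (ii) B(A^λ, A^μ) = 0 whenever λ + μ ≠ ν; (iii) for every λ the restriction of B to A^λ × A^{ν−λ} is a perfect pairing; (iv) the ν-eigenspace A^ν is one-dimensional and equals Ann_A(m), the unique minimal nonzero ideal of A. -/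
/-!
Since `D` is a derivation, multiplication adds eigenvalues, and the invariance of `B` forces
`A^λ ⟂ A^μ` unless `λ + μ = ν`; as `A` is the sum of its eigenspaces, nondegeneracy of `B`
then makes `A^λ × A^{ν-λ}` a perfect pairing, so `dim A^ν = dim A^0 = 1`.
An eigenvector of nonzero eigenvalue `μ` is nilpotent, because its nonzero powers would give
infinitely many eigenvalues `n μ`; hence `m` is the sum of the eigenspaces `A^μ`, `μ ≠ 0`, and
`A^ν ⟂ m`. In a Frobenius algebra `Ann(I)` is the orthogonal of `I`, so `A^ν ⊆ Ann(m)`, and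
`a ↦ B(a, 1)` is injective on `Ann(m)` because `A = ℂ·1 + m`; this gives `A^ν = Ann(m)`.
Finally `Ann(Ann(I)) = I`, so any ideal `I ≠ 0` has `Ann(I) ⊆ m` and `Ann(m) ⊆ Ann(Ann(I)) = I`.
-/

open Module Module.End LinearMap.BilinForm

section Derivation

variable {K A : Type*} [Field K] [Ring A] [Algebra K A] {D : A →ₗ[K] A}

theorem mul_mem_eigenspace_add (hder : ∀ a b : A, D (a * b) = D a * b + a * D b)
    {lam μ : K} {a b : A} (ha : a ∈ eigenspace D lam) (hb : b ∈ eigenspace D μ) :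
    a * b ∈ eigenspace D (lam + μ) := by
  rw [mem_eigenspace_iff] at ha hb ⊢
  rw [hder, ha, hb, smul_mul_assoc, mul_smul_comm, add_smul]

theorem one_mem_eigenspace_zero (hder : ∀ a b : A, D (a * b) = D a * b + a * D b) :
    (1 : A) ∈ eigenspace D 0 := by
  rw [mem_eigenspace_iff, zero_smul]
  simpa using hder 1 1

theorem pow_mem_eigenspace_nsmul (hder : ∀ a b : A, D (a * b) = D a * b + a * D b)
    {μ : K} {a : A} (ha : a ∈ eigenspace D μ) (n : ℕ) : a ^ n ∈ eigenspace D (n • μ) := by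
  induction n with
  | zero => simpa using one_mem_eigenspace_zero hder
  | succ n ih => rw [pow_succ, succ_nsmul]; exact mul_mem_eigenspace_add hder ih ha

theorem isNilpotent_of_mem_eigenspace [CharZero K] [FiniteDimensional K A]
    (hder : ∀ a b : A, D (a * b) = D a * b + a * D b)
    {μ : K} (hμ : μ ≠ 0) {a : A} (ha : a ∈ eigenspace D μ) : IsNilpotent a := by
  by_contra hnil
  have hev : ∀ n : ℕ, HasEigenvalue D (n • μ) := fun n =>
    hasEigenvalue_of_hasEigenvector ⟨pow_mem_eigenspace_nsmul hder ha n, fun h => hnil ⟨n, h⟩⟩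
  have hinj : Function.Injective fun n : ℕ => n • μ := fun i j h => by
    simpa [nsmul_eq_mul, hμ] using h
  exact Set.infinite_of_injective_forall_mem hinj hev (finite_hasEigenvalue D)

end Derivation

section InvariantForm

variable {K V : Type*} [Field K] [AddCommGroup V] [Module K V]
  {B : LinearMap.BilinForm K V} {D : V →ₗ[K] V} {ν : K}

theorem apply_eq_zero_of_mem_eigenspace
    (hcompat : ∀ a b : V, B (D a) b + B a (D b) = ν * B a b)
    {lam μ : K} (h : lam + μ ≠ ν) {a b : V}
    (ha : a ∈ eigenspace D lam) (hb : b ∈ eigenspace D μ) : B a b = 0 := by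
  rw [mem_eigenspace_iff] at ha hb
  have key : (lam + μ - ν) * B a b = 0 := by
    have := hcompat a b
    rw [ha, hb, map_smul, map_smul, LinearMap.smul_apply, smul_eq_mul, smul_eq_mul] at this
    linear_combination this
  exact (mul_eq_zero.1 key).resolve_left (sub_ne_zero.2 h)

theorem eq_zero_of_apply_eigenspace_sub_eq_zero (hnd : ∀ a : V, (∀ b : V, B a b = 0) → a = 0)
    (hdiag : ⨆ μ : K, eigenspace D μ = ⊤)
    (hcompat : ∀ a b : V, B (D a) b + B a (D b) = ν * B a b)
    {lam : K} {a : V} (ha : a ∈ eigenspace D lam)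
    (h : ∀ b ∈ eigenspace D (ν - lam), B a b = 0) : a = 0 := by
  refine hnd a fun b => ?_
  have hker : ⨆ μ : K, eigenspace D μ ≤ LinearMap.ker (B a) := iSup_le fun μ b hb => by
    by_cases hμ : lam + μ = ν
    · obtain rfl : μ = ν - lam := by rw [← hμ]; ring
      exact h b hb
    · exact apply_eq_zero_of_mem_eigenspace hcompat hμ ha hb
  exact hker (hdiag ▸ Submodule.mem_top)

theorem finrank_eigenspace_le_finrank_eigenspace_sub [FiniteDimensional K V]
    (hnd : ∀ a : V, (∀ b : V, B a b = 0) → a = 0)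
    (hdiag : ⨆ μ : K, eigenspace D μ = ⊤)
    (hcompat : ∀ a b : V, B (D a) b + B a (D b) = ν * B a b) (lam : K) :
    finrank K (eigenspace D lam) ≤ finrank K (eigenspace D (ν - lam)) := by
  refine (LinearMap.finrank_le_finrank_of_injective
    (f := B.domRestrict₁₂ (eigenspace D lam) (eigenspace D (ν - lam))) ?_).trans_eq
    Subspace.dual_finrank_eq
  rw [injective_iff_map_eq_zero]
  intro a ha
  exact Subtype.ext (eq_zero_of_apply_eigenspace_sub_eq_zero hnd hdiag hcompat a.2
    fun b hb => LinearMap.congr_fun ha ⟨b, hb⟩)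

end InvariantForm

section Frobenius

variable {K A : Type*} [Field K] [CommRing A] [Algebra K A] {B : LinearMap.BilinForm K A}

theorem orthogonal_eq_annihilator (hnd : ∀ a : A, (∀ b : A, B a b = 0) → a = 0)
    (hfrob : ∀ a b c : A, B (a * b) c = B a (b * c)) (I : Ideal A) :
    B.orthogonal (I.restrictScalars K) = I.annihilator.restrictScalars K := by
  ext a
  simp only [mem_orthogonal_iff, Submodule.restrictScalars_mem, Submodule.mem_annihilator,
    smul_eq_mul]
  refine ⟨fun h x hx => hnd _ fun y => ?_, fun h x hx => ?_⟩
  · rw [mul_comm, hfrob, mul_comm a y, ← hfrob]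
    exact h _ (I.mul_mem_right y hx)
  · rw [← mul_one a, ← hfrob, mul_comm, h x hx, map_zero, LinearMap.zero_apply]

theorem annihilator_annihilator [FiniteDimensional K A] (hsymm : ∀ a b : A, B a b = B b a)
    (hnd : ∀ a : A, (∀ b : A, B a b = 0) → a = 0)
    (hfrob : ∀ a b c : A, B (a * b) c = B a (b * c)) (I : Ideal A) :
    I.annihilator.annihilator = I := by
  have hrefl : B.IsRefl := fun a b h => hsymm a b ▸ h
  have hB : B.Nondegenerate := (LinearMap.IsRefl.nondegenerate_iff_separatingLeft hrefl).2 hnd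
  apply Submodule.restrictScalars_injective K
  rw [← orthogonal_eq_annihilator hnd hfrob, ← orthogonal_eq_annihilator hnd hfrob,
    orthogonal_orthogonal hB hrefl]

theorem annihilator_le_of_ne_bot [FiniteDimensional K A] (hsymm : ∀ a b : A, B a b = B b a)
    (hnd : ∀ a : A, (∀ b : A, B a b = 0) → a = 0)
    (hfrob : ∀ a b c : A, B (a * b) c = B a (b * c))
    {m : Ideal A} (hloc : ∀ I : Ideal A, I ≠ ⊤ → I ≤ m) {I : Ideal A} (hI : I ≠ ⊥) :
    m.annihilator ≤ I :=
  calc m.annihilator ≤ I.annihilator.annihilator :=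
        Submodule.annihilator_mono (hloc _ (Submodule.annihilator_eq_top_iff.not.2 hI))
    _ = I := annihilator_annihilator hsymm hnd hfrob I

theorem finrank_annihilator_le_one (hnd : ∀ a : A, (∀ b : A, B a b = 0) → a = 0)
    (hfrob : ∀ a b c : A, B (a * b) c = B a (b * c))
    {m : Ideal A} (hres : ∀ a : A, ∃ c : K, a - algebraMap K A c ∈ m) :
    finrank K (m.annihilator.restrictScalars K) ≤ 1 := by
  refine (LinearMap.finrank_le_finrank_of_injective
    (f := (B.flip 1).domRestrict (m.annihilator.restrictScalars K)) ?_).trans_eq (finrank_self K)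
  rw [injective_iff_map_eq_zero]
  rintro ⟨a, ha⟩ h1
  simp only [Submodule.restrictScalars_mem, Submodule.mem_annihilator, smul_eq_mul] at ha
  replace h1 : B a 1 = 0 := h1
  refine Subtype.ext (hnd a fun y => ?_)
  obtain ⟨c, hc⟩ := hres y
  calc B a y = B (a * (y - algebraMap K A c)) 1 + c * B a 1 := by
        rw [hfrob, mul_one, map_sub, Algebra.algebraMap_eq_smul_one, map_smul, smul_eq_mul]
        ring
    _ = 0 := by rw [ha _ hc, h1, map_zero, LinearMap.zero_apply, mul_zero, add_zero]

end Frobenius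

section GradedFrobenius

variable {K A : Type*} [Field K] [CommRing A] [Algebra K A] {D : A →ₗ[K] A}

theorem restrictScalars_eq_iSup_eigenspace_ne_zero [CharZero K] [FiniteDimensional K A]
    (hder : ∀ a b : A, D (a * b) = D a * b + a * D b)
    (hdiag : ⨆ μ : K, eigenspace D μ = ⊤) (hzero : eigenspace D 0 = K ∙ (1 : A))
    {m : Ideal A} (hm : m ≠ ⊤) (hloc : ∀ I : Ideal A, I ≠ ⊤ → I ≤ m) :
    m.restrictScalars K = ⨆ (μ : K) (_ : μ ≠ 0), eigenspace D μ := by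
  set S := ⨆ (μ : K) (_ : μ ≠ 0), eigenspace D μ
  have : m.IsPrime := Ideal.IsMaximal.isPrime
    ⟨hm, fun J hJ => by_contra fun hJ' => hJ.not_ge (hloc J hJ')⟩
  have hSm : S ≤ m.restrictScalars K := iSup₂_le fun μ hμ a ha =>
    nilradical_le_prime m (isNilpotent_of_mem_eigenspace hder hμ ha)
  have htop : S ⊔ K ∙ (1 : A) = ⊤ := top_le_iff.1 <| hdiag ▸ iSup_le fun μ => by
    by_cases hμ : μ = 0
    · subst hμ; rw [hzero]; exact le_sup_right
    · exact le_sup_of_le_left (le_iSup₂ (f := fun μ (_ : μ ≠ 0) => eigenspace D μ) μ hμ)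
  have hdisj : m.restrictScalars K ⊓ K ∙ (1 : A) = ⊥ := disjoint_iff.1 <|
    Submodule.disjoint_span_singleton.2 fun h => absurd ((Ideal.eq_top_iff_one m).2 h) hm
  calc m.restrictScalars K = (S ⊔ K ∙ (1 : A)) ⊓ m.restrictScalars K := by
        rw [htop, top_inf_eq]
    _ = S := by rw [sup_inf_assoc_of_le _ hSm, inf_comm, hdisj, sup_bot_eq]

theorem eigenspace_le_annihilator {B : LinearMap.BilinForm K A} {ν : K}
    (hnd : ∀ a : A, (∀ b : A, B a b = 0) → a = 0)
    (hfrob : ∀ a b c : A, B (a * b) c = B a (b * c))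
    (hcompat : ∀ a b : A, B (D a) b + B a (D b) = ν * B a b) {m : Ideal A}
    (hmS : m.restrictScalars K ≤ ⨆ (μ : K) (_ : μ ≠ 0), eigenspace D μ) :
    eigenspace D ν ≤ m.annihilator.restrictScalars K := by
  rw [← orthogonal_eq_annihilator hnd hfrob]
  intro a ha x hx
  have hker : ⨆ (μ : K) (_ : μ ≠ 0), eigenspace D μ ≤ LinearMap.ker (B.flip a) :=
    iSup₂_le fun μ hμ y hy => apply_eq_zero_of_mem_eigenspace hcompat (by simpa using hμ) hy ha
  exact hker (hmS hx)

end GradedFrobenius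

/-- Let `(A, B)` be a commutative Frobenius ℂ-algebra which is a local ring with maximal
ideal `m` and residue field ℂ.  Let `D` be a diagonalizable derivation of `A` whose
`0`-eigenspace is exactly `ℂ·1`, and suppose `ν ∈ ℂ` satisfies
`B(Da, b) + B(a, Db) = ν B(a, b)`.  Writing `A^λ` for the `λ`-eigenspace of `D`:
(i) `A^λ · A^μ ⊆ A^{λ+μ}`; (ii) `B(A^λ, A^μ) = 0` whenever `λ + μ ≠ ν`; (iii) for every
`λ` the restriction of `B` to `A^λ × A^{ν-λ}` is a perfect pairing (separating on both
sides, with equal dimensions); (iv) `A^ν` is one-dimensional and equals `Ann_A(m)`, the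
unique minimal nonzero ideal of `A`. -/
theorem stmt11
    (A : Type*) [CommRing A] [Algebra ℂ A] [FiniteDimensional ℂ A]
    (B : A →ₗ[ℂ] A →ₗ[ℂ] ℂ)
    (hsymm : ∀ a b : A, B a b = B b a)
    (hnd : ∀ a : A, (∀ b : A, B a b = 0) → a = 0)
    (hfrob : ∀ a b c : A, B (a * b) c = B a (b * c))
    (m : Ideal A) (hm : m ≠ ⊤)
    (hloc : ∀ I : Ideal A, I ≠ ⊤ → I ≤ m)
    (hres : ∀ a : A, ∃ c : ℂ, a - algebraMap ℂ A c ∈ m)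
    (D : A →ₗ[ℂ] A)
    (hder : ∀ a b : A, D (a * b) = D a * b + a * D b)
    (hdiag : ⨆ μ : ℂ, Module.End.eigenspace D μ = ⊤)
    (hzero : Module.End.eigenspace D 0 = Submodule.span ℂ {(1 : A)})
    (ν : ℂ)
    (hcompat : ∀ a b : A, B (D a) b + B a (D b) = ν * B a b) :
    (∀ lam μ : ℂ, ∀ a ∈ Module.End.eigenspace D lam, ∀ b ∈ Module.End.eigenspace D μ,
        a * b ∈ Module.End.eigenspace D (lam + μ)) ∧
    (∀ lam μ : ℂ, lam + μ ≠ ν →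
        ∀ a ∈ Module.End.eigenspace D lam, ∀ b ∈ Module.End.eigenspace D μ, B a b = 0) ∧
    (∀ lam : ℂ,
      (∀ a ∈ Module.End.eigenspace D lam,
          (∀ b ∈ Module.End.eigenspace D (ν - lam), B a b = 0) → a = 0) ∧
      (∀ b ∈ Module.End.eigenspace D (ν - lam),
          (∀ a ∈ Module.End.eigenspace D lam, B a b = 0) → b = 0) ∧
      Module.finrank ℂ (Module.End.eigenspace D lam) =
        Module.finrank ℂ (Module.End.eigenspace D (ν - lam))) ∧
    (Module.finrank ℂ (Module.End.eigenspace D ν) = 1 ∧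
      ((Module.End.eigenspace D ν : Set A) = {a : A | ∀ x ∈ m, a * x = 0}) ∧
      (∀ I : Ideal A, I ≠ ⊥ → (Module.End.eigenspace D ν : Set A) ⊆ (I : Set A))) := by
  have : Nontrivial A := ⟨⟨1, 0, fun h => hm ((Ideal.eq_top_iff_one m).2 (h ▸ m.zero_mem))⟩⟩
  have hsep (lam : ℂ) : ∀ a ∈ eigenspace D lam, (∀ b ∈ eigenspace D (ν - lam), B a b = 0) →
      a = 0 := fun _ => eq_zero_of_apply_eigenspace_sub_eq_zero hnd hdiag hcompat
  have hdim (lam : ℂ) : finrank ℂ (eigenspace D lam) = finrank ℂ (eigenspace D (ν - lam)) :=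
    le_antisymm (finrank_eigenspace_le_finrank_eigenspace_sub hnd hdiag hcompat lam) <| by
      have := finrank_eigenspace_le_finrank_eigenspace_sub hnd hdiag hcompat (ν - lam)
      rwa [sub_sub_cancel] at this
  have hdimν : finrank ℂ (eigenspace D ν) = 1 := by
    rw [← sub_zero ν, ← hdim, hzero, finrank_span_singleton one_ne_zero]
  have hann : eigenspace D ν = m.annihilator.restrictScalars ℂ :=
    Submodule.eq_of_le_of_finrank_le
      (eigenspace_le_annihilator hnd hfrob hcompat
        (restrictScalars_eq_iSup_eigenspace_ne_zero hder hdiag hzero hm hloc).le)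
      (hdimν ▸ finrank_annihilator_le_one hnd hfrob hres)
  refine ⟨fun _ _ _ ha _ hb => mul_mem_eigenspace_add hder ha hb,
    fun _ _ h _ ha _ hb => apply_eq_zero_of_mem_eigenspace hcompat h ha hb,
    fun lam => ⟨hsep lam, fun b hb h => ?_, hdim lam⟩, hdimν, ?_, fun I hI => ?_⟩
  · refine hsep (ν - lam) b hb fun a ha => ?_
    rw [hsymm]
    exact h a (by rwa [sub_sub_cancel] at ha)
  · rw [hann]
    exact Set.ext fun a => Submodule.mem_annihilator
  · rw [hann]
    exact annihilator_le_of_ne_bot hsymm hnd hfrob hloc hI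
end
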